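/- arXiv:1011.3252 — 5 statements merged into one kernel-verified Lean document; each statement's English description precedes it below -/
import Mathlib

section
/- Let ℓ, n, q be natural numbers satisfying: q ≤ 2n; (as integers) 2n − ℓ ≤ 2q ≤ 2n + ℓ; if n = 0 then ℓ is even and ℓ ≥ 2; and it is not the case that ℓ = 0 and n = 1. Then 2·(2n² + 2n + ℓ² + ℓ − (2q − 2n)²) ≥ 12, and equality holds for (ℓ, n, q) = (1, 1, 1). -/
/-- Let `ℓ, n, q` be natural numbers satisfying: `q ≤ 2n`; (as integers)
`2n − ℓ ≤ 2q ≤ 2n + ℓ`; if `n = 0` then `ℓ` is even and `ℓ ≥ 2`; and it is not the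
case that `ℓ = 0` and `n = 1`. Then `2(2n² + 2n + ℓ² + ℓ − (2q − 2n)²) ≥ 12`, and
equality holds for `(ℓ, n, q) = (1, 1, 1)`. -/
theorem first_eigenvalue_twelve (ℓ n q : ℕ)
    (h1 : q ≤ 2 * n)
    (h2 : 2 * (n : ℤ) - (ℓ : ℤ) ≤ 2 * (q : ℤ))
    (h3 : 2 * (q : ℤ) ≤ 2 * (n : ℤ) + (ℓ : ℤ))
    (h4 : n = 0 → Even ℓ ∧ 2 ≤ ℓ)
    (h5 : ¬(ℓ = 0 ∧ n = 1)) :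
    12 ≤ 2 * (2 * (n : ℤ) ^ 2 + 2 * n + (ℓ : ℤ) ^ 2 + ℓ - (2 * (q : ℤ) - 2 * n) ^ 2) ∧
      2 * (2 * (1 : ℤ) ^ 2 + 2 * 1 + (1 : ℤ) ^ 2 + 1 - (2 * (1 : ℤ) - 2 * 1) ^ 2) = 12 := by
  refine ⟨?_, by norm_num⟩
  rcases Nat.eq_zero_or_pos n with hn | hn
  · -- n = 0 : then q = 0, ℓ ≥ 2
    obtain ⟨-, hl2⟩ := h4 hn
    have hq : q = 0 := by omega
    subst hn hq
    have : (2 : ℤ) ≤ (ℓ : ℤ) := by exact_mod_cast hl2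
    nlinarith
  · rcases Nat.lt_or_ge ℓ 2 with hl | hl
    · interval_cases ℓ
      · -- ℓ = 0 : then 2q = 2n, n ≥ 2
        have hn2 : 2 ≤ n := by
          rcases Nat.lt_or_ge n 2 with h | h
          · interval_cases n
            exact absurd ⟨rfl, rfl⟩ h5
          · exact h
        have hq : 2 * (q : ℤ) = 2 * (n : ℤ) := le_antisymm (by simpa using h3) (by simpa using h2)
        have : (2 : ℤ) ≤ (n : ℤ) := by exact_mod_cast hn2
        nlinarith
      · -- ℓ = 1 : then 2q − 2n is even with |·| ≤ 1, so q = n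
        have hq : (q : ℤ) = (n : ℤ) := by push_cast at h2 h3 ⊢; omega
        have : (1 : ℤ) ≤ (n : ℤ) := by exact_mod_cast hn
        rw [hq]
        push_cast
        nlinarith
    · -- ℓ ≥ 2, n ≥ 1
      have hd : (2 * (q : ℤ) - 2 * n) ^ 2 ≤ (ℓ : ℤ) ^ 2 := by
        have := sq_le_sq' (by linarith : -(ℓ : ℤ) ≤ 2 * (q : ℤ) - 2 * n)
          (by linarith : 2 * (q : ℤ) - 2 * n ≤ (ℓ : ℤ))
        simpa using this
      have hl' : (2 : ℤ) ≤ (ℓ : ℤ) := by exact_mod_cast hl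
      have hn' : (1 : ℤ) ≤ (n : ℤ) := by exact_mod_cast hn
      nlinarith
end

section
/- Let D_F and D_G be the unique ℂ-linear derivations of the polynomial ring ℂ[x, y] determined by D_F(x) = −(1/√2)·y, D_F(y) = (1/√2)·x, and D_G(x) = (i/√2)·y, D_G(y) = (i/√2)·x. Then for all natural numbers ℓ and p with p ≤ 2ℓ: (D_F² + D_G²)(x^p y^{2ℓ−p}) = 2·(p² − 2ℓp − ℓ)·x^p y^{2ℓ−p}, where the scalar 2(p² − 2ℓp − ℓ) is computed in ℤ and cast into ℂ. -/
/-!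
Every derivation of `R[x, y]` is `D x • ∂ₓ + D y • ∂_y`, so `D_F = (x ∂_y - y ∂ₓ)/√2`
and `D_G = i (y ∂ₓ + x ∂_y)/√2`. In `D_F² + D_G²` the terms `y² ∂ₓ²` and `x² ∂_y²` cancel,
leaving `-(x ∂ₓ + y ∂_y + 2 x y ∂ₓ ∂_y)`, which acts on `x^p y^q` by `-(p + q + 2 p q)`;
for `q = 2ℓ - p` this is `2 (p² - 2ℓp - ℓ)`.
-/

open MvPolynomial

theorem MvPolynomial.derivation_eq_sum_pderiv_smul {R σ A : Type*} [CommSemiring R] [Fintype σ]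
    [AddCommMonoid A] [Module R A] [Module (MvPolynomial σ R) A]
    [IsScalarTower R (MvPolynomial σ R) A]
    (D : Derivation R (MvPolynomial σ R) A) (f : MvPolynomial σ R) :
    D f = ∑ i, pderiv i f • D (X i) := by
  classical
  induction f using MvPolynomial.induction_on with
  | C a => simp [derivation_C]
  | add f g hf hg => simp only [map_add, hf, hg, add_smul, Finset.sum_add_distrib]
  | mul_X f i hf =>
    simp only [Derivation.leibniz, hf, Finset.smul_sum, smul_smul, (pderiv _).leibniz, pderiv_X,
      add_smul, Finset.sum_add_distrib]
    simp [Pi.single_apply]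

theorem MvPolynomial.X_mul_X_mul_pderiv_pderiv_monomial {R σ : Type*} [CommSemiring R]
    {i j : σ} (hij : i ≠ j) (s : σ →₀ ℕ) (r : R) :
    X i * X j * pderiv i (pderiv j (monomial s r)) = (s i * s j) • monomial s r := by
  have hX : pderiv i (X j * pderiv j (monomial s r)) =
      X j * pderiv i (pderiv j (monomial s r)) := by
    simp [pderiv_X_of_ne hij.symm]
  rw [mul_assoc, ← hX, X_mul_pderiv_monomial, map_nsmul, mul_smul_comm, X_mul_pderiv_monomial,
    smul_smul, mul_comm]

section TwoVariables

variable {R : Type*} [CommRing R]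

theorem derivation_apply_eq_of_apply_X_eq_smul
    (D : Derivation R (MvPolynomial (Fin 2) R) (MvPolynomial (Fin 2) R)) {c d : R}
    (hx : D (X 0) = c • X 1) (hy : D (X 1) = d • X 0) (f : MvPolynomial (Fin 2) R) :
    D f = c • (X 1 * pderiv 0 f) + d • (X 0 * pderiv 1 f) := by
  rw [derivation_eq_sum_pderiv_smul, Fin.sum_univ_two, hx, hy, smul_eq_mul, smul_eq_mul,
    mul_smul_comm, mul_smul_comm, mul_comm, mul_comm (pderiv 1 f)]

theorem derivation_apply_apply_eq_of_apply_X_eq_smul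
    (D : Derivation R (MvPolynomial (Fin 2) R) (MvPolynomial (Fin 2) R)) {c d : R}
    (hx : D (X 0) = c • X 1) (hy : D (X 1) = d • X 0) (f : MvPolynomial (Fin 2) R) :
    D (D f) = c ^ 2 • (X 1 ^ 2 * pderiv 0 (pderiv 0 f)) +
      d ^ 2 • (X 0 ^ 2 * pderiv 1 (pderiv 1 f)) +
      (c * d) • (X 0 * pderiv 0 f + X 1 * pderiv 1 f +
        X 0 * X 1 * (pderiv 0 (pderiv 1 f) + pderiv 1 (pderiv 0 f))) := by
  rw [derivation_apply_eq_of_apply_X_eq_smul D hx hy (D f),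
    derivation_apply_eq_of_apply_X_eq_smul D hx hy f]
  simp only [map_add, Derivation.map_smul, pderiv_mul, pderiv_X_self, pderiv_X_of_ne, ne_eq,
    Fin.zero_ne_one, one_ne_zero, not_false_eq_true]
  simp only [smul_eq_C_mul, map_mul, map_pow]
  ring

theorem derivation_apply_apply_add_apply_apply_eq_neg
    {DF DG : Derivation R (MvPolynomial (Fin 2) R) (MvPolynomial (Fin 2) R)} {cF dF cG dG : R}
    (hFx : DF (X 0) = cF • X 1) (hFy : DF (X 1) = dF • X 0)
    (hGx : DG (X 0) = cG • X 1) (hGy : DG (X 1) = dG • X 0)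
    (hc : cF ^ 2 + cG ^ 2 = 0) (hd : dF ^ 2 + dG ^ 2 = 0) (hcd : cF * dF + cG * dG = -1)
    (f : MvPolynomial (Fin 2) R) :
    DF (DF f) + DG (DG f) = -(X 0 * pderiv 0 f + X 1 * pderiv 1 f +
      X 0 * X 1 * (pderiv 0 (pderiv 1 f) + pderiv 1 (pderiv 0 f))) := by
  rw [derivation_apply_apply_eq_of_apply_X_eq_smul DF hFx hFy,
    derivation_apply_apply_eq_of_apply_X_eq_smul DG hGx hGy]
  linear_combination (norm := module) hc • (X 1 ^ 2 * pderiv 0 (pderiv 0 f)) +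
    hd • (X 0 ^ 2 * pderiv 1 (pderiv 1 f)) + hcd • (X 0 * pderiv 0 f + X 1 * pderiv 1 f +
      X 0 * X 1 * (pderiv 0 (pderiv 1 f) + pderiv 1 (pderiv 0 f)))

theorem derivation_apply_apply_add_apply_apply_X_pow_mul_X_pow
    {DF DG : Derivation R (MvPolynomial (Fin 2) R) (MvPolynomial (Fin 2) R)} {cF dF cG dG : R}
    (hFx : DF (X 0) = cF • X 1) (hFy : DF (X 1) = dF • X 0)
    (hGx : DG (X 0) = cG • X 1) (hGy : DG (X 1) = dG • X 0)
    (hc : cF ^ 2 + cG ^ 2 = 0) (hd : dF ^ 2 + dG ^ 2 = 0) (hcd : cF * dF + cG * dG = -1)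
    (p q : ℕ) :
    DF (DF (X 0 ^ p * X 1 ^ q)) + DG (DG (X 0 ^ p * X 1 ^ q)) =
      (-(p + q + 2 * p * q : R)) • (X 0 ^ p * X 1 ^ q) := by
  have hm : (X 0 ^ p * X 1 ^ q : MvPolynomial (Fin 2) R) =
      monomial (Finsupp.single 0 p + Finsupp.single 1 q) 1 := by
    simp [X_pow_eq_monomial, monomial_mul]
  rw [derivation_apply_apply_add_apply_apply_eq_neg hFx hFy hGx hGy hc hd hcd, hm, mul_add,
    X_mul_X_mul_pderiv_pderiv_monomial zero_ne_one, mul_comm (X 0) (X 1),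
    X_mul_X_mul_pderiv_pderiv_monomial one_ne_zero, X_mul_pderiv_monomial, X_mul_pderiv_monomial]
  simp only [← Nat.cast_smul_eq_nsmul R, Finsupp.add_apply, Finsupp.single_eq_same,
    Finsupp.single_eq_of_ne zero_ne_one, Finsupp.single_eq_of_ne one_ne_zero, Nat.cast_mul,
    Nat.cast_add]
  module

end TwoVariables

/-- Let `D_F` and `D_G` be the unique `ℂ`-linear derivations of `ℂ[x, y]` determined by
`D_F(x) = −(1/√2)·y`, `D_F(y) = (1/√2)·x`, `D_G(x) = (i/√2)·y`, `D_G(y) = (i/√2)·x`.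
Then for all natural numbers `ℓ` and `p` with `p ≤ 2ℓ`:
`(D_F² + D_G²)(x^p y^{2ℓ−p}) = 2(p² − 2ℓp − ℓ) · x^p y^{2ℓ−p}`,
the scalar being computed in `ℤ` and cast into `ℂ`. -/
theorem derivation_F_sq_add_G_sq_eigenvalue
    (DF DG : Derivation ℂ (MvPolynomial (Fin 2) ℂ) (MvPolynomial (Fin 2) ℂ))
    (hFx : DF (X 0) = (-(1 / (Real.sqrt 2 : ℂ))) • X 1)
    (hFy : DF (X 1) = (1 / (Real.sqrt 2 : ℂ)) • X 0)
    (hGx : DG (X 0) = (Complex.I / (Real.sqrt 2 : ℂ)) • X 1)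
    (hGy : DG (X 1) = (Complex.I / (Real.sqrt 2 : ℂ)) • X 0)
    (ℓ p : ℕ) (hp : p ≤ 2 * ℓ) :
    DF (DF (X 0 ^ p * X 1 ^ (2 * ℓ - p))) + DG (DG (X 0 ^ p * X 1 ^ (2 * ℓ - p))) =
      ((2 * ((p : ℤ) ^ 2 - 2 * (ℓ : ℤ) * (p : ℤ) - (ℓ : ℤ)) : ℤ) : ℂ) •
        (X 0 ^ p * X 1 ^ (2 * ℓ - p)) := by
  have hsqrt : ((Real.sqrt 2 : ℝ) : ℂ) ^ 2 = 2 := by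
    norm_cast
    exact Real.sq_sqrt zero_le_two
  have hsqrt_ne : ((Real.sqrt 2 : ℝ) : ℂ) ≠ 0 := by
    exact_mod_cast (Real.sqrt_pos.2 zero_lt_two).ne'
  rw [derivation_apply_apply_add_apply_apply_X_pow_mul_X_pow hFx hFy hGx hGy
    (by field_simp; linear_combination Complex.I_sq)
    (by field_simp; linear_combination Complex.I_sq)
    (by field_simp; linear_combination hsqrt + Complex.I_sq)]
  congr 1
  push_cast [Nat.cast_sub hp]
  ring
end

section
/- Let D and D′ be the unique ℂ-linear derivations of the polynomial ring ℂ[x, y] determined by D(x) = −y, D(y) = x, and D′(x) = i·y, D′(y) = i·x. Then for all natural numbers n and q with q ≤ 2n: (D² + D′²)(x^q y^{2n−q}) = 4·(q² − 2nq − n)·x^q y^{2n−q}, where the scalar 4(q² − 2nq − n) is computed in ℤ and cast into ℂ. -/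
open MvPolynomial

lemma hI2 : (C Complex.I : MvPolynomial (Fin 2) ℂ) ^ 2 = -1 := by
  rw [← C_pow, Complex.I_sq, map_neg, map_one]

lemma hC (D : Derivation ℂ (MvPolynomial (Fin 2) ℂ) (MvPolynomial (Fin 2) ℂ)) (z : ℂ) :
    D (C z) = 0 := by
  have : (C z : MvPolynomial (Fin 2) ℂ) = algebraMap ℂ _ z := rfl
  rw [this, Derivation.map_algebraMap]

lemma helper
    (D D' : Derivation ℂ (MvPolynomial (Fin 2) ℂ) (MvPolynomial (Fin 2) ℂ))
    (hDx : D (X 0) = -(X 1))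
    (hDy : D (X 1) = X 0)
    (hD'x : D' (X 0) = Complex.I • X 1)
    (hD'y : D' (X 1) = Complex.I • X 0)
    (q m : ℕ) :
    D (D (X 0 ^ q * X 1 ^ m)) + D' (D' (X 0 ^ q * X 1 ^ m)) =
      ((-2 * (2 * q * m + q + m) : ℤ) : ℂ) • (X 0 ^ q * X 1 ^ m) := by
  match q, m with
  | 0, 0 => simp
  | 0, 1 =>
    simp only [Derivation.leibniz, Derivation.leibniz_pow, smul_eq_mul, map_add, map_smul,
      map_neg, Derivation.map_one_eq_zero, Derivation.map_natCast, hC, hDx, hDy, hD'x, hD'y,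
      nsmul_eq_mul, mul_zero, zero_mul, add_zero, zero_add, smul_zero, neg_zero, pow_zero,
      pow_one, smul_neg, smul_eq_C_mul]
    push_cast
    ring_nf
    try rw [hI2]
    simp only [map_sub, map_neg, map_mul, map_add, map_ofNat, map_natCast, map_one]
    try push_cast
    try ring
  | 0, (k+2) =>
    simp only [Derivation.leibniz, Derivation.leibniz_pow, smul_eq_mul, map_add, map_smul,
      map_neg, Derivation.map_one_eq_zero, Derivation.map_natCast, hC, hDx, hDy, hD'x, hD'y,
      nsmul_eq_mul, mul_zero, zero_mul, add_zero, zero_add, smul_zero, neg_zero, pow_zero,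
      pow_one, smul_neg, smul_eq_C_mul]
    push_cast
    ring_nf
    try rw [hI2]
    simp only [map_sub, map_neg, map_mul, map_add, map_ofNat, map_natCast, map_one]
    try push_cast
    try ring
  | 1, 0 =>
    simp only [Derivation.leibniz, Derivation.leibniz_pow, smul_eq_mul, map_add, map_smul,
      map_neg, Derivation.map_one_eq_zero, Derivation.map_natCast, hC, hDx, hDy, hD'x, hD'y,
      nsmul_eq_mul, mul_zero, zero_mul, add_zero, zero_add, smul_zero, neg_zero, pow_zero,
      pow_one, smul_neg, smul_eq_C_mul]
    push_cast
    ring_nf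
    try rw [hI2]
    simp only [map_sub, map_neg, map_mul, map_add, map_ofNat, map_natCast, map_one]
    try push_cast
    try ring
  | 1, 1 =>
    simp only [Derivation.leibniz, Derivation.leibniz_pow, smul_eq_mul, map_add, map_smul,
      map_neg, Derivation.map_one_eq_zero, Derivation.map_natCast, hC, hDx, hDy, hD'x, hD'y,
      nsmul_eq_mul, mul_zero, zero_mul, add_zero, zero_add, smul_zero, neg_zero, pow_zero,
      pow_one, smul_neg, smul_eq_C_mul]
    push_cast
    ring_nf
    try rw [hI2]
    simp only [map_sub, map_neg, map_mul, map_add, map_ofNat, map_natCast, map_one]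
    try push_cast
    try ring
  | 1, (k+2) =>
    simp only [Derivation.leibniz, Derivation.leibniz_pow, smul_eq_mul, map_add, map_smul,
      map_neg, Derivation.map_one_eq_zero, Derivation.map_natCast, hC, hDx, hDy, hD'x, hD'y,
      nsmul_eq_mul, mul_zero, zero_mul, add_zero, zero_add, smul_zero, neg_zero, pow_zero,
      pow_one, smul_neg, smul_eq_C_mul]
    push_cast
    ring_nf
    try rw [hI2]
    simp only [map_sub, map_neg, map_mul, map_add, map_ofNat, map_natCast, map_one]
    try push_cast
    try ring
  | (j+2), 0 =>
    simp only [Derivation.leibniz, Derivation.leibniz_pow, smul_eq_mul, map_add, map_smul,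
      map_neg, Derivation.map_one_eq_zero, Derivation.map_natCast, hC, hDx, hDy, hD'x, hD'y,
      nsmul_eq_mul, mul_zero, zero_mul, add_zero, zero_add, smul_zero, neg_zero, pow_zero,
      pow_one, smul_neg, smul_eq_C_mul]
    push_cast
    ring_nf
    try rw [hI2]
    simp only [map_sub, map_neg, map_mul, map_add, map_ofNat, map_natCast, map_one]
    try push_cast
    try ring
  | (j+2), 1 =>
    simp only [Derivation.leibniz, Derivation.leibniz_pow, smul_eq_mul, map_add, map_smul,
      map_neg, Derivation.map_one_eq_zero, Derivation.map_natCast, hC, hDx, hDy, hD'x, hD'y,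
      nsmul_eq_mul, mul_zero, zero_mul, add_zero, zero_add, smul_zero, neg_zero, pow_zero,
      pow_one, smul_neg, smul_eq_C_mul]
    push_cast
    ring_nf
    try rw [hI2]
    simp only [map_sub, map_neg, map_mul, map_add, map_ofNat, map_natCast, map_one]
    try push_cast
    try ring
  | (j+2), (k+2) =>
    simp only [Derivation.leibniz, Derivation.leibniz_pow, smul_eq_mul, map_add, map_smul,
      map_neg, Derivation.map_one_eq_zero, Derivation.map_natCast, hC, hDx, hDy, hD'x, hD'y,
      nsmul_eq_mul, mul_zero, zero_mul, add_zero, zero_add, smul_zero, neg_zero, pow_zero,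
      pow_one, smul_neg, smul_eq_C_mul]
    push_cast
    ring_nf
    try rw [hI2]
    simp only [map_sub, map_neg, map_mul, map_add, map_ofNat, map_natCast, map_one]
    try push_cast
    try ring

/-- Let `D` and `D′` be the unique `ℂ`-linear derivations of `ℂ[x, y]` determined by
`D(x) = −y`, `D(y) = x`, `D′(x) = i·y`, `D′(y) = i·x`. Then for all natural numbers
`n` and `q` with `q ≤ 2n`:
`(D² + D′²)(x^q y^{2n−q}) = 4(q² − 2nq − n) · x^q y^{2n−q}`,
the scalar being computed in `ℤ` and cast into `ℂ`. -/
theorem derivation_F2_sq_add_G2_sq_eigenvalue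
    (D D' : Derivation ℂ (MvPolynomial (Fin 2) ℂ) (MvPolynomial (Fin 2) ℂ))
    (hDx : D (X 0) = -(X 1))
    (hDy : D (X 1) = X 0)
    (hD'x : D' (X 0) = Complex.I • X 1)
    (hD'y : D' (X 1) = Complex.I • X 0)
    (n q : ℕ) (hq : q ≤ 2 * n) :
    D (D (X 0 ^ q * X 1 ^ (2 * n - q))) + D' (D' (X 0 ^ q * X 1 ^ (2 * n - q))) =
      ((4 * ((q : ℤ) ^ 2 - 2 * (n : ℤ) * (q : ℤ) - (n : ℤ)) : ℤ) : ℂ) •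
        (X 0 ^ q * X 1 ^ (2 * n - q)) := by
  rw [helper D D' hDx hDy hD'x hD'y q (2 * n - q)]
  congr 1
  have h : ((2 * n - q : ℕ) : ℤ) = 2 * (n : ℤ) - (q : ℤ) := by
    push_cast [Nat.cast_sub hq]; ring
  push_cast [h]
  ring
end

section
/- For 2×2 complex matrices X and Y that are traceless and skew-Hermitian, the following are equivalent: (1) there exists c ∈ ℂ with Dρ(X,Y)·p = c·p; (2) there exists t ∈ ℝ with X = t·diag(i, −i) and Y = t·diag(−2i, 2i). In other words, the isotropy Lie algebra of the line ℂ·p in 𝔰𝔲(2)⊕𝔰𝔲(2) is the real span of H = (diag(i, −i), diag(−2i, 2i)). -/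
open Matrix Kronecker

/-- The induced action of a `2×2` matrix `X` on `S²(ℂ²)` in the orthonormal basis
`(e₁², √2·e₁e₂, e₂²)`. -/
noncomputable def sMat (X : Matrix (Fin 2) (Fin 2) ℂ) : Matrix (Fin 3) (Fin 3) ℂ :=
  !![2 * X 0 0, (Real.sqrt 2 : ℂ) * X 0 1, 0;
     (Real.sqrt 2 : ℂ) * X 1 0, X 0 0 + X 1 1, (Real.sqrt 2 : ℂ) * X 0 1;
     0, (Real.sqrt 2 : ℂ) * X 1 0, 2 * X 1 1]

/-- The infinitesimal action `Dρ(X,Y) = s(X) ⊗ I₂ + I₃ ⊗ Y` on `ℂ⁶ = ℂ³ ⊗ ℂ²`. -/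
noncomputable def Drho (X Y : Matrix (Fin 2) (Fin 2) ℂ) :
    Matrix (Fin 3 × Fin 2) (Fin 3 × Fin 2) ℂ :=
  sMat X ⊗ₖ (1 : Matrix (Fin 2) (Fin 2) ℂ) + (1 : Matrix (Fin 3) (Fin 3) ℂ) ⊗ₖ Y

/-- The point `p = (1/√2)(u₁⊗e₁ + u₃⊗e₂) = (1/√2, 0, 0, 0, 0, 1/√2) ∈ ℂ⁶`. -/
noncomputable def pvec : Fin 3 × Fin 2 → ℂ :=
  fun x => if x = (0, 0) ∨ x = (2, 1) then (1 / (Real.sqrt 2 : ℂ)) else 0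

/-- For traceless skew-Hermitian `2×2` complex matrices `X` and `Y`, the following are
equivalent: (1) there exists `c ∈ ℂ` with `Dρ(X,Y)·p = c·p`; (2) there exists `t ∈ ℝ`
with `X = t·diag(i, −i)` and `Y = t·diag(−2i, 2i)`. In other words, the isotropy Lie
algebra of the line `ℂ·p` in `𝔰𝔲(2)⊕𝔰𝔲(2)` is the real span of
`H = (diag(i, −i), diag(−2i, 2i))`. -/
theorem isotropy_algebra_of_line
    (X Y : Matrix (Fin 2) (Fin 2) ℂ)
    (hX0 : X.trace = 0) (hXsk : Xᴴ = -X)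
    (hY0 : Y.trace = 0) (hYsk : Yᴴ = -Y) :
    (∃ c : ℂ, (Drho X Y).mulVec pvec = c • pvec) ↔
      (∃ t : ℝ, X = (t : ℂ) • !![Complex.I, 0; 0, -Complex.I] ∧
        Y = (t : ℂ) • !![-(2 * Complex.I), 0; 0, 2 * Complex.I]) := by
  have htr : X 1 1 = -X 0 0 := by
    have := hX0
    simp [Matrix.trace, Fin.sum_univ_two, Matrix.diag] at this
    linear_combination this
  have htrY : Y 1 1 = -Y 0 0 := by
    have := hY0
    simp [Matrix.trace, Fin.sum_univ_two, Matrix.diag] at this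
    linear_combination this
  have hre : (X 0 0).re = 0 := by
    have := congrFun (congrFun hXsk 0) 0
    simp [Matrix.conjTranspose_apply] at this
    have := congrArg Complex.re this
    simp at this
    linarith
  constructor
  · rintro ⟨c, h⟩
    have h00 := congrFun h (0,0)
    have h01 := congrFun h (0,1)
    have h10 := congrFun h (1,0)
    have h11 := congrFun h (1,1)
    have h20 := congrFun h (2,0)
    have h21 := congrFun h (2,1)
    simp [Drho, sMat, pvec, Matrix.mulVec, dotProduct, Fintype.sum_prod_type,
      Fin.sum_univ_succ, Matrix.one_apply, Prod.ext_iff] at h00 h01 h10 h11 h20 h21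
    have hY00 : Y 0 0 = -2 * X 0 0 := by
      rw [htr, htrY] at h21
      linear_combination (h00 - h21) / 2
    refine ⟨(X 0 0).im, ?_, ?_⟩
    · ext i j
      fin_cases i <;> fin_cases j <;>
        simp [h10, h11, htr] <;>
        · apply Complex.ext <;> simp [hre]
    · ext i j
      fin_cases i <;> fin_cases j <;>
        simp [h01, h20, htrY, hY00] <;>
        · apply Complex.ext <;> simp [hre] <;> ring
  · rintro ⟨t, hX, hY⟩
    refine ⟨0, ?_⟩
    subst hX hY
    funext x
    obtain ⟨i, j⟩ := x
    fin_cases i <;> fin_cases j <;>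
      simp [Drho, sMat, pvec, Matrix.mulVec, dotProduct, Fintype.sum_prod_type,
        Fin.sum_univ_succ, Matrix.one_apply, Prod.ext_iff] <;> ring
end

section
/- Let A = [[0,1],[−1,0]] and B = [[0,i],[i,0]], and set F₁ = ((1/√2)·A, 0), G₁ = ((1/√2)·B, 0), F₂ = (0, A), G₂ = (0, B), and V₁ = ((1/5)·diag(2i, −2i), (1/5)·diag(i, −i)), all elements of 𝔰𝔲(2)⊕𝔰𝔲(2). Then the five vectors Dρ(F₁)·p, Dρ(G₁)·p, Dρ(F₂)·p, Dρ(G₂)·p, Dρ(V₁)·p in ℂ⁶ form an orthonormal family with respect to the real inner product Re⟪·,·⟫, and each of them is Re⟪·,·⟫-orthogonal to both p and i·p. -/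
open Matrix Kronecker

/-- The real part of the standard Hermitian inner product on `ℂ⁶`. -/
noncomputable def rip (u v : Fin 3 × Fin 2 → ℂ) : ℝ :=
  (∑ k : Fin 3 × Fin 2, u k * star (v k)).re

/-!
Writing `Dρ(X,Y)p` out in the basis `uₖ ⊗ eₗ`, only the first column of `s(X)` and of `Y` act on
`u₁ ⊗ e₁` and only the last ones on `u₃ ⊗ e₂`, so every `Dρ(X,Y)p` is `1/√2` times an explicit
`3 × 2` array. For the five given generators these arrays have two nonzero entries in `{±1, ±i}`,
on the coordinate pairs `{u₂e₁, u₂e₂}` (for `F₁, G₁`), `{u₁e₂, u₃e₁}` (for `F₂, G₂`) and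
`{u₁e₁, u₃e₂}` (for `V₁`, and for `p` itself). Vectors on different pairs are orthogonal, which leaves
a two-term computation within each pair.
-/

open Complex

def ofCoords (M : Matrix (Fin 3) (Fin 2) ℂ) : Fin 3 × Fin 2 → ℂ := fun x => M x.1 x.2

@[simp]
lemma ofCoords_apply (M : Matrix (Fin 3) (Fin 2) ℂ) (k : Fin 3) (l : Fin 2) :
    ofCoords M (k, l) = M k l := rfl

lemma rip_ofCoords (M N : Matrix (Fin 3) (Fin 2) ℂ) :
    rip (ofCoords M) (ofCoords N) = (∑ k, ∑ l, M k l * star (N k l)).re := by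
  rw [rip, Fintype.sum_prod_type]
  rfl

lemma rip_smul_smul (c : ℝ) (u v : Fin 3 × Fin 2 → ℂ) :
    rip (c • u) (c • v) = c ^ 2 * rip u v := by
  simp only [rip, Pi.smul_apply, Complex.real_smul, star_mul', Complex.star_def,
    Complex.conj_ofReal]
  rw [← Complex.re_ofReal_mul, Finset.mul_sum]
  congr 1
  refine Finset.sum_congr rfl fun k _ => ?_
  push_cast
  ring

lemma pvec_eq : pvec = (Real.sqrt 2)⁻¹ • ofCoords !![1, 0; 0, 0; 0, 1] := by
  ext ⟨k, l⟩
  fin_cases k <;> fin_cases l <;> simp [pvec]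

lemma Drho_mulVec_pvec (X Y : Matrix (Fin 2) (Fin 2) ℂ) :
    Drho X Y *ᵥ pvec = (Real.sqrt 2)⁻¹ • ofCoords
      !![2 * X 0 0 + Y 0 0, Y 1 0;
         (Real.sqrt 2 : ℂ) * X 1 0, (Real.sqrt 2 : ℂ) * X 0 1;
         Y 0 1, 2 * X 1 1 + Y 1 1] := by
  ext ⟨k, l⟩
  fin_cases k <;> fin_cases l <;>
    simp [Drho, sMat, pvec, mulVec, dotProduct, Fintype.sum_prod_type, Fin.sum_univ_succ,
      one_apply] <;> field_simp

/-- `√2 · Dρ(F₁)p, √2 · Dρ(G₁)p, √2 · Dρ(F₂)p, √2 · Dρ(G₂)p, √2 · Dρ(V₁)p`, as coordinate arrays. -/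
def frameCoords : Fin 5 → Matrix (Fin 3) (Fin 2) ℂ :=
  ![!![0, 0; -1, 1; 0, 0],
    !![0, 0; I, I; 0, 0],
    !![0, -1; 0, 0; 1, 0],
    !![0, I; 0, 0; I, 0],
    !![I, 0; 0, 0; 0, -I]]

lemma rip_frameCoords (i j : Fin 5) :
    rip (ofCoords (frameCoords i)) (ofCoords (frameCoords j)) = if i = j then 2 else 0 := by
  fin_cases i <;> fin_cases j <;> norm_num [rip_ofCoords, frameCoords, Fin.sum_univ_succ]

lemma rip_frameCoords_basepoint (i : Fin 5) :
    rip (ofCoords (frameCoords i)) (ofCoords !![1, 0; 0, 0; 0, 1]) = 0 ∧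
      rip (ofCoords (frameCoords i)) (ofCoords (I • !![1, 0; 0, 0; 0, 1])) = 0 := by
  fin_cases i <;> norm_num [rip_ofCoords, frameCoords, Fin.sum_univ_succ]

/-- Let `A = [[0,1],[−1,0]]`, `B = [[0,i],[i,0]]`, and set `F₁ = ((1/√2)·A, 0)`,
`G₁ = ((1/√2)·B, 0)`, `F₂ = (0, A)`, `G₂ = (0, B)`, and
`V₁ = ((1/5)·diag(2i, −2i), (1/5)·diag(i, −i))` in `𝔰𝔲(2)⊕𝔰𝔲(2)`. Then the five
vectors `Dρ(F₁)·p, Dρ(G₁)·p, Dρ(F₂)·p, Dρ(G₂)·p, Dρ(V₁)·p` in `ℂ⁶` form an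
orthonormal family with respect to the real inner product `Re⟪·,·⟫`, and each of them
is `Re⟪·,·⟫`-orthogonal to both `p` and `i·p`. -/
theorem horizontal_orthonormal_frame_at_p :
    let A : Matrix (Fin 2) (Fin 2) ℂ := !![0, 1; -1, 0]
    let B : Matrix (Fin 2) (Fin 2) ℂ := !![0, Complex.I; Complex.I, 0]
    let vs : Fin 5 → (Fin 3 × Fin 2 → ℂ) :=
      ![(Drho ((1 / (Real.sqrt 2 : ℂ)) • A) 0).mulVec pvec,
        (Drho ((1 / (Real.sqrt 2 : ℂ)) • B) 0).mulVec pvec,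
        (Drho 0 A).mulVec pvec,
        (Drho 0 B).mulVec pvec,
        (Drho ((1 / 5 : ℂ) • !![2 * Complex.I, 0; 0, -(2 * Complex.I)])
          ((1 / 5 : ℂ) • !![Complex.I, 0; 0, -Complex.I])).mulVec pvec]
    (∀ i j : Fin 5, rip (vs i) (vs j) = if i = j then 1 else 0) ∧
    (∀ i : Fin 5, rip (vs i) pvec = 0 ∧ rip (vs i) (Complex.I • pvec) = 0) := by
  intro A B vs
  have hvs (i : Fin 5) : vs i = (Real.sqrt 2)⁻¹ • ofCoords (frameCoords i) := by
    fin_cases i <;> simp [vs, Drho_mulVec_pvec, frameCoords, A, B]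
    ring_nf
  have hIp : I • pvec = (Real.sqrt 2)⁻¹ • ofCoords (I • !![1, 0; 0, 0; 0, 1]) := by
    rw [pvec_eq, smul_comm]
    rfl
  have hc : (Real.sqrt 2)⁻¹ ^ 2 = (1 / 2 : ℝ) := by
    rw [inv_pow, Real.sq_sqrt zero_le_two, one_div]
  refine ⟨fun i j => ?_, fun i => ?_⟩
  · rw [hvs, hvs, rip_smul_smul, rip_frameCoords, hc]
    split_ifs <;> norm_num
  · rw [hIp, pvec_eq, hvs, rip_smul_smul, rip_smul_smul, (rip_frameCoords_basepoint i).1,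
      (rip_frameCoords_basepoint i).2, mul_zero]
    exact ⟨rfl, rfl⟩
end
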